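/- Let r = (r_{ij})_{0≤i≤j≤n} be an array of natural numbers with r_{ii} = dim V_i for all i. Then the open quiver locus Ω°_r is nonempty if and only if every entry of the lace array of r is nonnegative, i.e., s_{pq} = r_{pq} − r_{p−1,q} − r_{p,q+1} + r_{p−1,q+1} ≥ 0 for all 0 ≤ p ≤ q ≤ n. -/
import Mathlib


/-- The space of representations of the equioriented `A_{n+1}` quiver on `V 0, …, V n`:
tuples of linear maps `φ i : V i →ₗ V (i+1)` for `0 ≤ i < n`. -/
abbrev HomSp (n : ℕ) (V : ℕ → Type*) [∀ i, AddCommGroup (V i)] [∀ i, Module ℂ (V i)] : Type _ :=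
  ∀ i : Fin n, V (i : ℕ) →ₗ[ℂ] V ((i : ℕ) + 1)

/-- The composite map `φ_{i → j} : V i → V j` (the identity when `i = j`,
junk when `j < i` or the needed maps are out of range). -/
def chainComp {n : ℕ} {V : ℕ → Type*} [∀ i, AddCommGroup (V i)] [∀ i, Module ℂ (V i)]
    (φ : HomSp n V) (i : ℕ) : (j : ℕ) → (V i →ₗ[ℂ] V j)
  | 0 => if h : i = 0 then (by subst h; exact LinearMap.id) else 0
  | (j + 1) =>
      if h : i = j + 1 then (by subst h; exact LinearMap.id)
      else if hj : j < n then (φ ⟨j, hj⟩).comp (chainComp φ i j) else 0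

/-- Two quiver representations lie in the same orbit of the change-of-basis action of
`GL = GL(V 0) × ⋯ × GL(V n)`, i.e. are isomorphic as quiver representations. -/
def sameOrbit {n : ℕ} {V : ℕ → Type*} [∀ i, AddCommGroup (V i)] [∀ i, Module ℂ (V i)]
    (φ ψ : HomSp n V) : Prop :=
  ∃ g : ∀ k : Fin (n + 1), V (k : ℕ) ≃ₗ[ℂ] V (k : ℕ),
    ∀ i : Fin n, (g i.succ).toLinearMap.comp (φ i) = (ψ i).comp (g i.castSucc).toLinearMap

/-- `φ` lies in the open quiver locus `Ω°_r`: every composite `φ_{i→j}` (`0 ≤ i ≤ j ≤ n`)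
has rank exactly `r i j`. -/
def inOpenLocus {n : ℕ} {V : ℕ → Type*} [∀ i, AddCommGroup (V i)] [∀ i, Module ℂ (V i)]
    (r : ℕ → ℕ → ℕ) (φ : HomSp n V) : Prop :=
  ∀ i j : ℕ, i ≤ j → j ≤ n →
    Module.finrank ℂ (LinearMap.range (chainComp φ i j)) = r i j

/-- The entry `s p q = r p q − r (p−1) q − r p (q+1) + r (p−1) (q+1)` of the lace array of a
rank array `r`, where `r` is extended by `0` whenever the first index is `< 0` or the second
index is `> n` (recall `0 ≤ p ≤ q ≤ n`, so `p − 1 < 0` iff `p = 0` and `q + 1 > n` iff `q = n`). -/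
def laceEntry (n : ℕ) (r : ℕ → ℕ → ℕ) (p q : ℕ) : ℤ :=
  (r p q : ℤ) - (if p = 0 then 0 else (r (p - 1) q : ℤ))
    - (if q = n then 0 else (r p (q + 1) : ℤ))
    + (if p = 0 ∨ q = n then 0 else (r (p - 1) (q + 1) : ℤ))

/-! ### Auxiliary material for the proof -/

open Module LinearMap Submodule

section AuxGeneral

theorem aux_map_ker {M N : Type*} [AddCommGroup M] [Module ℂ M] [AddCommGroup N] [Module ℂ N]
    [FiniteDimensional ℂ M] (c : M →ₗ[ℂ] N) (W : Submodule ℂ M) :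
    finrank ℂ (W.map c) + finrank ℂ ↥(W ⊓ ker c) = finrank ℂ W := by
  have h := LinearMap.finrank_range_add_finrank_ker (c.domRestrict W)
  rw [LinearMap.ker_domRestrict] at h
  have h1 : range (c.domRestrict W) = W.map c := by
    rw [domRestrict, range_comp, Submodule.range_subtype]
  have h2 : finrank ℂ ↥((ker c).comap W.subtype) =
      finrank ℂ ↥(Submodule.map W.subtype ((ker c).comap W.subtype)) :=
    (Submodule.equivMapOfInjective _ W.injective_subtype _).finrank_eq
  rw [Submodule.map_comap_subtype] at h2
  rw [h1, h2] at h
  exact h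

theorem aux_frobenius {M0 M1 M2 M3 : Type*} [AddCommGroup M0] [Module ℂ M0]
    [AddCommGroup M1] [Module ℂ M1] [AddCommGroup M2] [Module ℂ M2]
    [AddCommGroup M3] [Module ℂ M3] [FiniteDimensional ℂ M1] [FiniteDimensional ℂ M2]
    (a : M0 →ₗ[ℂ] M1) (b : M1 →ₗ[ℂ] M2) (c : M2 →ₗ[ℂ] M3) :
    finrank ℂ (range (c ∘ₗ b)) + finrank ℂ (range ((b ∘ₗ a)))
      ≤ finrank ℂ (range b) + finrank ℂ (range (c ∘ₗ b ∘ₗ a)) := by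
  have e1 : range (c ∘ₗ b) = (range b).map c := by rw [range_comp]
  have e2 : range (c ∘ₗ b ∘ₗ a) = (range (b ∘ₗ a)).map c := by
    simp [range_comp, Submodule.map_comp]
  have h1 := aux_map_ker c (range b)
  have h2 := aux_map_ker c (range (b ∘ₗ a))
  have hmono : finrank ℂ ↥(range (b ∘ₗ a) ⊓ ker c) ≤ finrank ℂ ↥(range b ⊓ ker c) :=
    Submodule.finrank_mono (inf_le_inf_right _ (range_comp_le_range a b))
  rw [e1, e2]
  omega

theorem aux_rank_comp_le_l {M1 M2 M3 : Type*} [AddCommGroup M1] [Module ℂ M1]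
    [AddCommGroup M2] [Module ℂ M2] [AddCommGroup M3] [Module ℂ M3]
    [FiniteDimensional ℂ M3] (g : M1 →ₗ[ℂ] M2) (f : M2 →ₗ[ℂ] M3) :
    finrank ℂ (range (f ∘ₗ g)) ≤ finrank ℂ (range f) :=
  Submodule.finrank_mono (range_comp_le_range g f)

theorem aux_rank_comp_le_r {M1 M2 M3 : Type*} [AddCommGroup M1] [Module ℂ M1]
    [AddCommGroup M2] [Module ℂ M2] [AddCommGroup M3] [Module ℂ M3]
    [FiniteDimensional ℂ M2] (g : M1 →ₗ[ℂ] M2) (f : M2 →ₗ[ℂ] M3) :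
    finrank ℂ (range (f ∘ₗ g)) ≤ finrank ℂ (range g) := by
  rw [range_comp]
  exact Submodule.finrank_map_le f (range g)

theorem aux_rank_conj {M1 M2 W1 W2 : Type*} [AddCommGroup M1] [Module ℂ M1]
    [AddCommGroup M2] [Module ℂ M2] [AddCommGroup W1] [Module ℂ W1]
    [AddCommGroup W2] [Module ℂ W2]
    (e1 : M1 ≃ₗ[ℂ] W1) (e2 : W2 ≃ₗ[ℂ] M2) (g : W1 →ₗ[ℂ] W2) :
    finrank ℂ (range (e2.toLinearMap ∘ₗ g ∘ₗ e1.toLinearMap)) = finrank ℂ (range g) := by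
  rw [LinearMap.range_comp, LinearMap.range_comp_of_range_eq_top g e1.range]
  exact LinearEquiv.finrank_map_eq e2 (range g)

end AuxGeneral

section AuxChain

variable {n : ℕ} {V : ℕ → Type*} [∀ i, AddCommGroup (V i)] [∀ i, Module ℂ (V i)]

theorem chainComp_self (φ : HomSp n V) (i : ℕ) : chainComp φ i i = LinearMap.id := by
  cases i <;> simp [chainComp]

theorem chainComp_succ (φ : HomSp n V) {i j : ℕ} (hij : i ≤ j) (hj : j < n) :
    chainComp φ i (j + 1) = (φ ⟨j, hj⟩).comp (chainComp φ i j) := by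
  rw [chainComp, dif_neg (by omega), dif_pos hj]

theorem chainComp_comp (φ : HomSp n V) {i m : ℕ} (him : i ≤ m) :
    ∀ j, m ≤ j → j ≤ n → chainComp φ i j = (chainComp φ m j).comp (chainComp φ i m) := by
  refine Nat.le_induction ?_ ?_
  · rw [chainComp_self]; simp
  · intro j hmj ih hjn
    rw [chainComp_succ φ (him.trans hmj) (by omega), chainComp_succ φ hmj (by omega),
      ih (by omega), LinearMap.comp_assoc]

end AuxChain

section AuxTele

/-- auxiliary "G" function -/
def gFun (n : ℕ) (r : ℕ → ℕ → ℕ) (p q : ℕ) : ℤ :=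
  (r p q : ℤ) - (if q = n then 0 else (r p (q + 1) : ℤ))

theorem lace_eq_g (n : ℕ) (r : ℕ → ℕ → ℕ) (p q : ℕ) :
    laceEntry n r p q = gFun n r p q - (if p = 0 then 0 else gFun n r (p - 1) q) := by
  unfold laceEntry gFun
  by_cases hp : p = 0 <;> by_cases hq : q = n <;> simp [hp, hq] <;> ring

theorem tele1 (n : ℕ) (r : ℕ → ℕ → ℕ) (q : ℕ) (i : ℕ) :
    ∑ p ∈ Finset.range (i + 1), laceEntry n r p q = gFun n r i q := by
  induction i with
  | zero => simp [lace_eq_g]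
  | succ i ih =>
      rw [Finset.sum_range_succ, ih, lace_eq_g]
      rw [if_neg (by omega), Nat.add_sub_cancel]
      ring

theorem tele2 (n : ℕ) (r : ℕ → ℕ → ℕ) (i : ℕ) :
    ∀ d j, n = j + d → ∑ q ∈ Finset.Icc j n, gFun n r i q = (r i j : ℤ) := by
  intro d
  induction d with
  | zero => intro j hj; subst hj; simp [gFun]
  | succ d ih =>
      intro j hj
      rw [show Finset.Icc j n = insert j (Finset.Icc (j+1) n) by
            ext x; simp only [Finset.mem_Icc, Finset.mem_insert]; omega,
        Finset.sum_insert (by simp), ih (j+1) (by omega), gFun, if_neg (by omega)]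
      ring

theorem tele (n : ℕ) (r : ℕ → ℕ → ℕ) {i j : ℕ} (hjn : j ≤ n) :
    ∑ p ∈ Finset.range (i + 1), ∑ q ∈ Finset.Icc j n, laceEntry n r p q = (r i j : ℤ) := by
  rw [Finset.sum_comm]
  calc ∑ q ∈ Finset.Icc j n, ∑ p ∈ Finset.range (i + 1), laceEntry n r p q
      = ∑ q ∈ Finset.Icc j n, gFun n r i q :=
        Finset.sum_congr rfl fun q _ => tele1 n r q i
    _ = (r i j : ℤ) := tele2 n r i (n - j) j (by omega)

end AuxTele

section AuxCount

variable (n : ℕ) (s : ℕ → ℕ → ℕ)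

/-- upper bound for all relevant lace entries -/
def bigK : ℕ := 1 + ((Finset.range (n+1) ×ˢ Finset.range (n+1)).sup fun pq => s pq.1 pq.2)

/-- The index triples `(p, q, k)` with `p ≤ i`, `j ≤ q ≤ n`, `k < s p q`. -/
def TT (i j : ℕ) : Finset (ℕ × ℕ × ℕ) :=
  (Finset.range (n+1) ×ˢ Finset.range (n+1) ×ˢ Finset.range (bigK n s)).filter
    (fun t => t.1 ≤ i ∧ j ≤ t.2.1 ∧ t.2.2 < s t.1 t.2.1)

theorem sBound {p q : ℕ} (hp : p ≤ n) (hq : q ≤ n) : s p q < bigK n s := by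
  have hb : (p, q) ∈ Finset.range (n+1) ×ˢ Finset.range (n+1) := by
    simp only [Finset.mem_product, Finset.mem_range]; omega
  have : s p q ≤ (Finset.range (n+1) ×ˢ Finset.range (n+1)).sup
      (fun pq => s pq.1 pq.2) := Finset.le_sup (f := fun pq => s pq.1 pq.2) hb
  unfold bigK; omega

theorem mem_TT {i j : ℕ} (hi : i ≤ n) {t : ℕ × ℕ × ℕ} :
    t ∈ TT n s i j ↔ t.1 ≤ i ∧ j ≤ t.2.1 ∧ t.2.1 ≤ n ∧ t.2.2 < s t.1 t.2.1 := by
  unfold TT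
  simp only [Finset.mem_filter, Finset.mem_product, Finset.mem_range]
  constructor
  · rintro ⟨⟨h1, h2, h3⟩, h4, h5, h6⟩; exact ⟨h4, h5, by omega, h6⟩
  · rintro ⟨h1, h2, h3, h4⟩
    have := sBound n s (show t.1 ≤ n by omega) h3
    exact ⟨⟨by omega, by omega, by omega⟩, h1, h2, h4⟩

theorem card_TT {i j : ℕ} (hij : i ≤ j) (hjn : j ≤ n) :
    (TT n s i j).card = ∑ p ∈ Finset.range (i + 1), ∑ q ∈ Finset.Icc j n, s p q := by
  unfold TT
  rw [Finset.card_filter, Finset.sum_product, Finset.sum_congr rfl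
    (fun p _ => Finset.sum_product (s := Finset.range (n+1)) (t := Finset.range (bigK n s))
      (f := fun qk => if p ≤ i ∧ j ≤ qk.1 ∧ qk.2 < s p qk.1 then 1 else 0))]
  have inner : ∀ p q, p ≤ n → q ≤ n → (∑ k ∈ Finset.range (bigK n s),
      if p ≤ i ∧ j ≤ q ∧ k < s p q then (1:ℕ) else 0)
      = if p ≤ i ∧ j ≤ q then s p q else 0 := by
    intro p q hp hq
    by_cases h : p ≤ i ∧ j ≤ q
    · simp only [h.1, h.2, true_and, if_true]
      rw [← Finset.card_filter]
      rw [show (Finset.range (bigK n s)).filter (fun k => k < s p q) = Finset.range (s p q) by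
        ext k; simp only [Finset.mem_filter, Finset.mem_range]
        have := sBound n s hp hq; omega]
      exact Finset.card_range _
    · rw [if_neg h]
      refine Finset.sum_eq_zero fun k _ => if_neg (by tauto)
  calc ∑ p ∈ Finset.range (n+1), ∑ q ∈ Finset.range (n+1), ∑ k ∈ Finset.range (bigK n s),
        (if p ≤ i ∧ j ≤ q ∧ k < s p q then (1:ℕ) else 0)
      = ∑ p ∈ Finset.range (n+1), ∑ q ∈ Finset.range (n+1),
          (if p ≤ i ∧ j ≤ q then s p q else 0) := by
        refine Finset.sum_congr rfl fun p hp => Finset.sum_congr rfl fun q hq => ?_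
        exact inner p q (by have := Finset.mem_range.1 hp; omega)
          (by have := Finset.mem_range.1 hq; omega)
    _ = ∑ p ∈ Finset.range (n+1), (if p ≤ i then ∑ q ∈ Finset.Icc j n, s p q else 0) := by
        refine Finset.sum_congr rfl fun p hp => ?_
        by_cases hpi : p ≤ i
        · simp only [hpi, true_and, if_true]
          rw [← Finset.sum_filter]
          congr 1
          ext q; simp only [Finset.mem_filter, Finset.mem_range, Finset.mem_Icc]; omega
        · simp only [hpi, false_and, if_false]
          exact Finset.sum_eq_zero fun q _ => rfl
    _ = ∑ p ∈ Finset.range (i + 1), ∑ q ∈ Finset.Icc j n, s p q := by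
        rw [← Finset.sum_filter]
        congr 1
        ext p; simp only [Finset.mem_filter, Finset.mem_range]; omega

end AuxCount

section AuxPcomp

variable {α : Type*} [DecidableEq α]

/-- restrict to `A` then extend by zero to `B`. -/
def pcomp (A B : Finset α) : (↥A → ℂ) →ₗ[ℂ] (↥B → ℂ) where
  toFun f b := if h : ↑b ∈ A then f ⟨b, h⟩ else 0
  map_add' f g := by funext b; by_cases h : ↑b ∈ A <;> simp [h]
  map_smul' c f := by funext b; by_cases h : ↑b ∈ A <;> simp [h]

theorem pcomp_apply (A B : Finset α) (f : ↥A → ℂ) (b : ↥B) :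
    pcomp A B f b = if h : ↑b ∈ A then f ⟨b, h⟩ else 0 := rfl

theorem pcomp_self (A : Finset α) : pcomp A A = LinearMap.id := by
  refine LinearMap.ext fun f => funext fun a => ?_
  rw [pcomp_apply, dif_pos a.2]
  exact congrArg f (Subtype.ext rfl)

theorem pcomp_comp (A B C : Finset α) (h : ∀ x, x ∈ A → x ∈ C → x ∈ B) :
    (pcomp B C).comp (pcomp A B) = pcomp A C := by
  refine LinearMap.ext fun f => funext fun c => ?_
  simp only [LinearMap.comp_apply, pcomp_apply]
  by_cases ha : ↑c ∈ A
  · rw [dif_pos (h _ ha c.2), dif_pos ha]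
  · rw [dif_neg ha]
    by_cases hb : ↑c ∈ B
    · rw [dif_pos hb, dif_neg ha]
    · rw [dif_neg hb]

theorem pcomp_injective {A B : Finset α} (hAB : ∀ x ∈ A, x ∈ B) :
    Function.Injective (pcomp A B) := by
  rw [← LinearMap.ker_eq_bot, LinearMap.ker_eq_bot']
  intro f hf
  funext a
  have := congrFun hf ⟨(a : α), hAB _ a.2⟩
  rw [pcomp_apply, dif_pos a.2] at this
  simpa using this

theorem pcomp_finrank (A B : Finset α) :
    Module.finrank ℂ (range (pcomp A B)) = (B.filter (· ∈ A)).card := by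
  classical
  set S : Finset α := B.filter (· ∈ A) with hS
  have hSA : ∀ x ∈ S, x ∈ A := fun x hx => (Finset.mem_filter.1 hx).2
  have hSB : ∀ x ∈ S, x ∈ B := fun x hx => (Finset.mem_filter.1 hx).1
  have hinj : Function.Injective (fun (x : ↥S) => (⟨x, hSA _ x.2⟩ : ↥A)) := by
    intro x y hxy
    have hv := congrArg Subtype.val hxy
    exact Subtype.ext hv
  have hfact : pcomp A B = (pcomp S B).comp
      (LinearMap.funLeft ℂ ℂ (fun (x : ↥S) => (⟨x, hSA _ x.2⟩ : ↥A))) := by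
    refine LinearMap.ext fun f => funext fun b => ?_
    simp only [LinearMap.comp_apply, pcomp_apply, LinearMap.funLeft_apply]
    by_cases hs : ↑b ∈ S
    · rw [dif_pos hs, dif_pos (hSA _ hs)]
    · rw [dif_neg hs, dif_neg (fun ha => hs (Finset.mem_filter.2 ⟨b.2, ha⟩))]
  have hsurj : Function.Surjective
      (LinearMap.funLeft ℂ ℂ (fun (x : ↥S) => (⟨x, hSA _ x.2⟩ : ↥A))) :=
    LinearMap.funLeft_surjective_of_injective ℂ ℂ _ hinj
  rw [hfact, LinearMap.range_comp, LinearMap.range_eq_top.2 hsurj, Submodule.map_top]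
  rw [LinearMap.finrank_range_of_inj (pcomp_injective hSB)]
  rw [Module.finrank_fintype_fun_eq_card, Fintype.card_coe]

end AuxPcomp

/-- the open quiver locus `Ω°_r` of a rank array `r` (with `r i i = dim (V i)`)
is nonempty iff all entries of the lace array of `r` are nonnegative. -/
theorem openLocus_nonempty_iff_lace_nonneg (n : ℕ) (V : ℕ → Type*) [∀ i, AddCommGroup (V i)]
    [∀ i, Module ℂ (V i)] [∀ i, FiniteDimensional ℂ (V i)]
    (r : ℕ → ℕ → ℕ) (hr : ∀ i ≤ n, r i i = Module.finrank ℂ (V i)) :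
    (∃ φ : HomSp n V, inOpenLocus r φ) ↔
      (∀ p q : ℕ, p ≤ q → q ≤ n → 0 ≤ laceEntry n r p q) := by
  constructor
  · -- forward: existence implies nonnegativity of lace entries
    rintro ⟨φ, hφ⟩ p q hpq hqn
    by_cases hp : p = 0 <;> by_cases hq : q = n
    · unfold laceEntry
      rw [if_pos hp, if_pos hq, if_pos (Or.inl hp)]
      omega
    · have hq' : q < n := by omega
      have h1 : chainComp φ p (q+1) = (φ ⟨q, hq'⟩).comp (chainComp φ p q) :=
        chainComp_succ φ hpq hq'
      have hle : r p (q+1) ≤ r p q := by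
        rw [← hφ p q hpq (by omega), ← hφ p (q+1) (by omega) (by omega), h1]
        exact aux_rank_comp_le_r _ _
      unfold laceEntry
      rw [if_pos hp, if_neg hq, if_pos (Or.inl hp)]
      omega
    · have h1 : chainComp φ (p-1) q = (chainComp φ p q).comp (chainComp φ (p-1) p) :=
        chainComp_comp φ (by omega) q hpq hqn
      have hle : r (p-1) q ≤ r p q := by
        rw [← hφ p q hpq hqn, ← hφ (p-1) q (by omega) hqn, h1]
        exact aux_rank_comp_le_l _ _
      unfold laceEntry
      rw [if_neg hp, if_pos hq, if_pos (Or.inr hq)]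
      omega
    · have hq' : q < n := by omega
      have h1 : chainComp φ (p-1) q = (chainComp φ p q).comp (chainComp φ (p-1) p) :=
        chainComp_comp φ (by omega) q hpq (by omega)
      have h2 : chainComp φ p (q+1) = (φ ⟨q, hq'⟩).comp (chainComp φ p q) :=
        chainComp_succ φ hpq hq'
      have h3 : chainComp φ (p-1) (q+1) = (φ ⟨q, hq'⟩).comp (chainComp φ (p-1) q) :=
        chainComp_succ φ (by omega) hq'
      have hfrob := aux_frobenius (chainComp φ (p-1) p) (chainComp φ p q) (φ ⟨q, hq'⟩)
      rw [← h1, ← h3, ← h2] at hfrob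
      rw [hφ p (q+1) (by omega) (by omega), hφ (p-1) q (by omega) (by omega),
        hφ p q hpq (by omega), hφ (p-1) (q+1) (by omega) (by omega)] at hfrob
      unfold laceEntry
      rw [if_neg hp, if_neg hq, if_neg (by tauto : ¬(p = 0 ∨ q = n))]
      omega
  · -- backward: construct a representation from the lace array
    intro hpos
    set s : ℕ → ℕ → ℕ := fun p q => (laceEntry n r p q).toNat with hsdef
    have hcardN : ∀ i j : ℕ, i ≤ j → j ≤ n → (TT n s i j).card = r i j := by
      intro i j hij hjn
      have hZ : ((TT n s i j).card : ℤ) = (r i j : ℤ) := by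
        rw [card_TT n s hij hjn]
        push_cast
        rw [← tele n r hjn]
        refine Finset.sum_congr rfl fun p hp => Finset.sum_congr rfl fun q hq => ?_
        have hp' := Finset.mem_range.1 hp
        have hq' := Finset.mem_Icc.1 hq
        exact Int.toNat_of_nonneg (hpos p q (by omega) (by omega))
      exact_mod_cast hZ
    let ψ : HomSp n (fun k => ↥(TT n s k k) → ℂ) :=
      fun i => pcomp (TT n s i i) (TT n s (i+1) (i+1))
    have hψdef : ∀ jj : Fin n, ψ jj = pcomp (TT n s jj jj) (TT n s (jj+1) (jj+1)) :=
      fun jj => rfl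
    have hchain : ∀ i j : ℕ, i ≤ j → j ≤ n →
        chainComp ψ i j = pcomp (TT n s i i) (TT n s j j) := by
      intro i
      refine Nat.le_induction ?_ ?_
      · intro _; rw [chainComp_self, pcomp_self]
      · intro j hij ih hj1
        rw [chainComp_succ ψ hij (by omega), ih (by omega), hψdef ⟨j, by omega⟩]
        refine pcomp_comp _ _ _ (fun x hxi hxj1 => ?_)
        have hA := (mem_TT n s (by omega : i ≤ n)).1 hxi
        have hB := (mem_TT n s (by omega : j + 1 ≤ n)).1 hxj1
        exact (mem_TT n s (by omega : j ≤ n)).2 ⟨by omega, by omega, hB.2.2.1, hB.2.2.2⟩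
    have hψrank : ∀ i j : ℕ, i ≤ j → j ≤ n →
        Module.finrank ℂ (LinearMap.range (chainComp ψ i j)) = r i j := by
      intro i j hij hjn
      rw [hchain i j hij hjn, pcomp_finrank]
      have hfe : (TT n s j j).filter (· ∈ TT n s i i) = TT n s i j := by
        ext t
        simp only [Finset.mem_filter, mem_TT n s hjn, mem_TT n s (hij.trans hjn)]
        constructor
        · rintro ⟨⟨a1, a2, a3, a4⟩, b1, b2, b3, b4⟩; exact ⟨b1, by omega, a3, a4⟩
        · rintro ⟨a1, a2, a3, a4⟩; exact ⟨⟨by omega, by omega, a3, a4⟩, a1, by omega, a3, a4⟩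
      rw [hfe, hcardN i j hij hjn]
    have hVW : ∀ k, k ≤ n →
        Module.finrank ℂ (V k) = Module.finrank ℂ (↥(TT n s k k) → ℂ) := by
      intro k hk
      rw [← hr k hk, Module.finrank_fintype_fun_eq_card, Fintype.card_coe,
        hcardN k k le_rfl hk]
    let E : ∀ k, k ≤ n → (V k ≃ₗ[ℂ] (↥(TT n s k k) → ℂ)) :=
      fun k hk => LinearEquiv.ofFinrankEq _ _ (hVW k hk)
    let φ : HomSp n V := fun i =>
      (E (↑i+1) i.isLt).symm.toLinearMap ∘ₗ ψ i ∘ₗ (E ↑i (Nat.le_of_lt i.isLt)).toLinearMap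
    have hφdef : ∀ (jj : Fin n) (h1 : (jj:ℕ)+1 ≤ n) (h2 : (jj:ℕ) ≤ n), φ jj =
        (E (↑jj+1) h1).symm.toLinearMap ∘ₗ ψ jj ∘ₗ (E ↑jj h2).toLinearMap :=
      fun jj _ _ => rfl
    refine ⟨φ, ?_⟩
    have hconj : ∀ i j, i ≤ j → ∀ hjn : j ≤ n, ∀ hin : i ≤ n, chainComp φ i j =
        (E j hjn).symm.toLinearMap ∘ₗ chainComp ψ i j ∘ₗ (E i hin).toLinearMap := by
      intro i
      refine Nat.le_induction ?_ ?_
      · intro hjn hin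
        rw [chainComp_self φ, chainComp_self ψ]
        refine LinearMap.ext fun x => ?_
        simp
      · intro j hij ih hj1 hin
        rw [chainComp_succ φ hij (by omega), chainComp_succ ψ hij (by omega),
          ih (by omega) hin, hφdef ⟨j, by omega⟩ (by omega) (by omega)]
        refine LinearMap.ext fun x => ?_
        simp
    intro i j hij hjn
    rw [hconj i j hij hjn (hij.trans hjn)]
    rw [aux_rank_conj (E i (hij.trans hjn)) (E j hjn).symm (chainComp ψ i j)]
    exact hψrank i j hij hjn
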